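/- Let H be a complex Hilbert space, let ε ∈ (0,1], let J : H → H be a bounded invertible linear operator with ‖I − J‖ ≤ ε and ‖I − J⁻¹‖ ≤ ε, and let X, Y be closed subspaces of H such that J maps X bijectively onto Y. Then the orthogonal projections P_X and P_Y of H onto X and Y satisfy ‖P_X − P_Y‖ ≤ 8√ε. -/

import Mathlib

/-!
`J` moves each unit vector of `X` by at most `ε` and lands in `Y`, so `(1 - P_Y) P_X` has norm
at most `ε`; symmetrically, using `J⁻¹`, so does `(1 - P_X) P_Y`. Writing
`P_X - P_Y = P_X (1 - P_Y) - (1 - P_X) P_Y` and noting that `P_X (1 - P_Y)` is the adjoint of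
`(1 - P_Y) P_X`, one gets `‖P_X - P_Y‖ ≤ 2ε`, which is at most `8√ε` when `ε ≤ 1`.
-/

theorem IsSelfAdjoint.norm_sub_le {A : Type*} [NormedRing A] [StarRing A] [NormedStarGroup A]
    {p q : A} (hp : IsSelfAdjoint p) (hq : IsSelfAdjoint q) :
    ‖p - q‖ ≤ ‖(1 - q) * p‖ + ‖(1 - p) * q‖ := by
  have hdecomp : p - q = star ((1 - q) * p) - (1 - p) * q := by
    rw [star_mul, hp.star_eq, ((IsSelfAdjoint.one A).sub hq).star_eq]
    noncomm_ring
  rw [hdecomp]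
  exact (_root_.norm_sub_le _ _).trans_eq (by rw [norm_star])

open ContinuousLinearMap

namespace Submodule

variable {𝕜 E : Type*} [RCLike 𝕜] [NormedAddCommGroup E] [InnerProductSpace 𝕜 E]

theorem norm_sub_starProjection_le {U : Submodule 𝕜 E} [U.HasOrthogonalProjection] (y : E)
    {w : E} (hw : w ∈ U) : ‖y - U.starProjection y‖ ≤ ‖y - w‖ := by
  rw [starProjection_minimal]
  exact ciInf_le ⟨0, Set.forall_mem_range.2 fun _ => norm_nonneg _⟩ (⟨w, hw⟩ : U)

theorem norm_one_sub_starProjection_comp_starProjection_le {U V : Submodule 𝕜 E}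
    [U.HasOrthogonalProjection] [V.HasOrthogonalProjection] {T : E →L[𝕜] E}
    (hT : Set.MapsTo T U V) : ‖(1 - V.starProjection) ∘L U.starProjection‖ ≤ ‖1 - T‖ := by
  refine opNorm_le_bound _ (norm_nonneg _) fun x => ?_
  set v := U.starProjection x
  have hv : v ∈ U := starProjection_apply_mem U x
  calc ‖v - V.starProjection v‖ ≤ ‖v - T v‖ := norm_sub_starProjection_le v (hT hv)
    _ = ‖(1 - T) v‖ := rfl
    _ ≤ ‖1 - T‖ * ‖v‖ := le_opNorm _ _
    _ ≤ ‖1 - T‖ * ‖x‖ := by gcongr; exact U.norm_starProjection_apply_le x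

end Submodule

open Submodule in
/-- **Abstract projection perturbation estimate.**
Let `H` be a complex Hilbert space, `ε ∈ (0,1]`, `J : H → H` a bounded invertible operator
with `‖I - J‖ ≤ ε` and `‖I - J⁻¹‖ ≤ ε`, and let `X`, `Y` be closed subspaces such that `J`
maps `X` bijectively onto `Y`. Then `‖P_X - P_Y‖ ≤ 8√ε` for the orthogonal projections. -/
theorem projection_perturbation {H : Type*} [NormedAddCommGroup H] [InnerProductSpace ℂ H]
    [CompleteSpace H] (ε : ℝ) (hε : ε ∈ Set.Ioc (0 : ℝ) 1) (J : H ≃L[ℂ] H)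
    (hJ : ‖(1 : H →L[ℂ] H) - (J : H →L[ℂ] H)‖ ≤ ε)
    (hJinv : ‖(1 : H →L[ℂ] H) - (J.symm : H →L[ℂ] H)‖ ≤ ε)
    (X Y : Submodule ℂ H) (hX : IsClosed (X : Set H)) (hY : IsClosed (Y : Set H))
    (hXY : ⇑J '' (X : Set H) = (Y : Set H)) :
    haveI : CompleteSpace ↥X := hX.completeSpace_coe
    haveI : CompleteSpace ↥Y := hY.completeSpace_coe
    ‖X.subtypeL.comp X.orthogonalProjectionOnto - Y.subtypeL.comp Y.orthogonalProjectionOnto‖ ≤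
      8 * Real.sqrt ε := by
  have : CompleteSpace X := hX.completeSpace_coe
  have : CompleteSpace Y := hY.completeSpace_coe
  have hJXY : Set.MapsTo J X Y := hXY ▸ Set.mapsTo_image J X
  have hJYX : Set.MapsTo J.symm Y X := by
    rw [← hXY]; rintro _ ⟨x, hx, rfl⟩; simpa using hx
  have hε_le : ε ≤ √ε := Real.le_sqrt_self_iff.2 hε.2
  calc ‖X.starProjection - Y.starProjection‖
      ≤ ‖(1 - Y.starProjection) ∘L X.starProjection‖
        + ‖(1 - X.starProjection) ∘L Y.starProjection‖ :=
        (isSelfAdjoint_starProjection X).norm_sub_le (isSelfAdjoint_starProjection Y)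
    _ ≤ ε + ε := add_le_add
        ((norm_one_sub_starProjection_comp_starProjection_le hJXY).trans hJ)
        ((norm_one_sub_starProjection_comp_starProjection_le hJYX).trans hJinv)
    _ ≤ 8 * √ε := by linarith [Real.sqrt_nonneg ε]
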